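/- Suppose t, s ∈ ℝ satisfy A(t,s) > 4 r e^{s+t}. If r ≤ a cos β then (∂²φ/∂s∂t)(t,s) > 0; in particular ∂²φ/∂s∂t has no zeros. If r > a cos β, then (∂²φ/∂s∂t)(t,s) = 0 if and only if (e^{2t} − X₀)(e^{2s} − Y₀) = B. -/

import Mathlib

open Real

noncomputable section

/-- Inverse hyperbolic cosine. -/
def arcosh (x : ℝ) : ℝ := Real.log (x + Real.sqrt (x ^ 2 - 1))

/-- `d₁ = √(a² + r² − 2ar cos β)`. -/
def d1 (a r β : ℝ) : ℝ := Real.sqrt (a ^ 2 + r ^ 2 - 2 * a * r * Real.cos β)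

/-- `d₂ = √(a² + r² + 2ar cos β)`. -/
def d2 (a r β : ℝ) : ℝ := Real.sqrt (a ^ 2 + r ^ 2 + 2 * a * r * Real.cos β)

/-- `A(t,s) = e^{2s+2t} + e^{2t} + d₁² e^{2s} + d₂²`. -/
def Afun (a r β t s : ℝ) : ℝ :=
  Real.exp (2 * s + 2 * t) + Real.exp (2 * t) + d1 a r β ^ 2 * Real.exp (2 * s) +
    d2 a r β ^ 2

/-- `φ(t,s) = arcosh(A(t,s)/(4 r e^{s+t}))`, the lifted distance function. -/
def phi (a r β t s : ℝ) : ℝ := _root_.arcosh (Afun a r β t s / (4 * r * Real.exp (s + t)))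

/-- `Y₀ = (r + a cos β)/(r − a cos β)`. -/
def Y0 (a r β : ℝ) : ℝ := (r + a * Real.cos β) / (r - a * Real.cos β)

/-- `X₀ = d₁² Y₀`. -/
def X0 (a r β : ℝ) : ℝ := d1 a r β ^ 2 * Y0 a r β

/-- `B = 4a³ r cos β sin²β/(r − a cos β)²`. -/
def Bq (a r β : ℝ) : ℝ :=
  4 * a ^ 3 * r * Real.cos β * Real.sin β ^ 2 / (r - a * Real.cos β) ^ 2

/-! Since `∂ₜ(4r e^{s+t}) = 4r e^{s+t}`, one gets `φₜ = (∂ₜA − A)/√(A² − 16r²e^{2s+2t})`, and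
differentiating this quotient in `s` gives `φₛₜ = 32XY·H(X, Y)/(2D√D)` with `X = e^{2t}`,
`Y = e^{2s}`, `D = A² − 16r²XY` and `H` affine in `X` and in `Y`. Every coefficient of `H` is
nonnegative, the one of `X` positive, when `r ≤ a cos β`; otherwise
`H = r(a cos β − r)((X − X₀)(Y − Y₀) − B)`. -/

lemma HasDerivAt.arcosh_div {A E : ℝ → ℝ} {A' E' x : ℝ} (hA : HasDerivAt A A' x)
    (hE : HasDerivAt E E' x) (hE0 : 0 < E x) (hEA : E x < A x) :
    HasDerivAt (fun y => Real.arcosh (A y / E y))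
      ((A' * E x - A x * E') / (E x * √(A x ^ 2 - E x ^ 2))) x := by
  have hu : 1 < A x / E x := (one_lt_div hE0).2 hEA
  have hdisc : 0 < A x ^ 2 - E x ^ 2 := by nlinarith
  have hsqrt : √((A x / E x) ^ 2 - 1) = √(A x ^ 2 - E x ^ 2) / E x := by
    rw [div_pow, div_sub_one (by positivity), sqrt_div hdisc.le, sqrt_sq hE0.le]
  have hpos : 0 < √(A x ^ 2 - E x ^ 2) := sqrt_pos.2 hdisc
  refine ((hasDerivAt_arcosh hu).comp x (hA.div hE hE0.ne')).congr_deriv ?_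
  rw [hsqrt]
  field_simp

lemma HasDerivAt.div_sqrt {N D : ℝ → ℝ} {N' D' x : ℝ} (hN : HasDerivAt N N' x)
    (hD : HasDerivAt D D' x) (hD0 : 0 < D x) :
    HasDerivAt (fun y => N y / √(D y))
      ((2 * N' * D x - N x * D') / (2 * D x * √(D x))) x := by
  have hs : 0 < √(D x) := sqrt_pos.2 hD0
  refine (hN.div (hD.sqrt hD0.ne') hs.ne').congr_deriv ?_
  field_simp
  rw [sq_sqrt hD0.le]
  ring

lemma hasDerivAt_exp_two_mul (x : ℝ) :
    HasDerivAt (fun y => exp (2 * y)) (2 * exp (2 * x)) x := by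
  simpa [mul_comm] using ((hasDerivAt_id' x).const_mul 2).exp

lemma d1_sq (a r β : ℝ) : d1 a r β ^ 2 = a ^ 2 + r ^ 2 - 2 * a * r * cos β := by
  have hc : 0 ≤ 1 + cos β := by linarith [neg_one_le_cos β]
  have hc' : 0 ≤ 1 - cos β := by linarith [cos_le_one β]
  -- `2(a² + r² − 2ar cos β) = (a − r)²(1 + cos β) + (a + r)²(1 − cos β)`
  exact sq_sqrt (by
    nlinarith [mul_nonneg (sq_nonneg (a - r)) hc, mul_nonneg (sq_nonneg (a + r)) hc'])

lemma d2_sq (a r β : ℝ) : d2 a r β ^ 2 = a ^ 2 + r ^ 2 + 2 * a * r * cos β := by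
  have hc : 0 ≤ 1 + cos β := by linarith [neg_one_le_cos β]
  have hc' : 0 ≤ 1 - cos β := by linarith [cos_le_one β]
  exact sq_sqrt (by
    nlinarith [mul_nonneg (sq_nonneg (a + r)) hc, mul_nonneg (sq_nonneg (a - r)) hc'])

def mixedDerivPoly (a r c X Y : ℝ) : ℝ :=
  r * (r + a * c) * X + r * (a * c - r) * (X * Y) +
    r * (r ^ 3 - a * r ^ 2 * c + a ^ 2 * r - 2 * a ^ 2 * r * c ^ 2 + a ^ 3 * c) * Y +
    r * (-r ^ 3 - a * r ^ 2 * c - a ^ 2 * r + 2 * a ^ 2 * r * c ^ 2 + a ^ 3 * c)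

lemma mixedDerivPoly_pos {a r c X Y : ℝ} (hr : 0 < r) (hc : c ≤ 1) (hc' : -1 ≤ c)
    (hX : 0 < X) (hY : 0 < Y) (hle : r ≤ a * c) : 0 < mixedDerivPoly a r c X Y := by
  have hacr : 0 ≤ a * c - r := by linarith
  have hc2 : 0 ≤ 1 - c ^ 2 := by nlinarith
  have hac2 : 0 ≤ a ^ 2 * c ^ 2 - r ^ 2 := by nlinarith
  have ha2 : 0 ≤ a ^ 2 - r ^ 2 := by nlinarith
  have hcoeffY : 0 ≤ (a * c - r) * (a ^ 2 - r ^ 2) + 2 * a ^ 2 * r * (1 - c ^ 2) := by positivity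
  have hcoeff1 : 0 ≤ (a * c - r) * (a ^ 2 - r ^ 2) + 2 * r * (a ^ 2 * c ^ 2 - r ^ 2) := by
    positivity
  -- `mixedDerivPoly a r c X Y = r(r + ac)X + r(ac − r)XY + r·hcoeffY·Y + r·hcoeff1` exactly.
  unfold mixedDerivPoly
  linarith [mul_pos (mul_pos hr (by linarith : 0 < r + a * c)) hX,
    mul_nonneg (mul_nonneg hr.le hacr) (mul_pos hX hY).le,
    mul_nonneg (mul_nonneg hr.le hcoeffY) hY.le, mul_nonneg hr.le hcoeff1]

lemma mixedDerivPoly_eq (a r β X Y : ℝ) (h : a * cos β ≠ r) :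
    mixedDerivPoly a r (cos β) X Y =
      r * (a * cos β - r) * ((X - X0 a r β) * (Y - Y0 a r β) - Bq a r β) := by
  have h' : r - a * cos β ≠ 0 := sub_ne_zero.2 h.symm
  rw [mixedDerivPoly, X0, Y0, Bq, d1_sq, sin_sq]
  field_simp
  ring

section

variable {a r β t s : ℝ}

lemma Afun_eq : Afun a r β t s =
    exp (2 * t) * exp (2 * s) + exp (2 * t) + d1 a r β ^ 2 * exp (2 * s) + d2 a r β ^ 2 := by
  rw [Afun, add_comm (2 * s), exp_add]

def phiNum (a r β t s : ℝ) : ℝ :=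
  exp (2 * t) * exp (2 * s) + exp (2 * t) - d1 a r β ^ 2 * exp (2 * s) - d2 a r β ^ 2

def phiDisc (a r β t s : ℝ) : ℝ := Afun a r β t s ^ 2 - (4 * r * exp (s + t)) ^ 2

lemma phiDisc_pos (hr : 0 < r) (h : 4 * r * exp (s + t) < Afun a r β t s) :
    0 < phiDisc a r β t s := by
  have : 0 < 4 * r * exp (s + t) := by positivity
  unfold phiDisc
  nlinarith

lemma hasDerivAt_phi_fst (hr : 0 < r) (h : 4 * r * exp (s + t) < Afun a r β t s) :
    HasDerivAt (fun t' => phi a r β t' s) (phiNum a r β t s / √(phiDisc a r β t s)) t := by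
  have hA : HasDerivAt (fun t' => Afun a r β t' s)
      (2 * exp (2 * t) * exp (2 * s) + 2 * exp (2 * t)) t := by
    simp_rw [Afun_eq]
    exact (((hasDerivAt_exp_two_mul t).mul_const (exp (2 * s))).add
      (hasDerivAt_exp_two_mul t)).add_const _ |>.add_const _ |>.congr_deriv (by ring)
  have hE : HasDerivAt (fun t' => 4 * r * exp (s + t')) (4 * r * exp (s + t)) t := by
    simpa using (((hasDerivAt_id' t).const_add s).exp).const_mul (4 * r)
  have hD := phiDisc_pos hr h
  refine (hA.arcosh_div hE (by positivity) h).congr_deriv ?_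
  rw [phiNum, phiDisc, Afun_eq]
  field_simp
  ring

lemma hasDerivAt_Afun_snd : HasDerivAt (fun s' => Afun a r β t s')
    (2 * exp (2 * t) * exp (2 * s) + 2 * d1 a r β ^ 2 * exp (2 * s)) s := by
  simp_rw [Afun_eq]
  exact ((((hasDerivAt_exp_two_mul s).const_mul (exp (2 * t))).add_const (exp (2 * t))).add
    ((hasDerivAt_exp_two_mul s).const_mul _)).add_const _ |>.congr_deriv (by ring)

lemma hasDerivAt_phiNum_snd : HasDerivAt (fun s' => phiNum a r β t s')
    (2 * exp (2 * t) * exp (2 * s) - 2 * d1 a r β ^ 2 * exp (2 * s)) s :=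
  ((((hasDerivAt_exp_two_mul s).const_mul (exp (2 * t))).add_const _).sub
    ((hasDerivAt_exp_two_mul s).const_mul _)).sub_const _ |>.congr_deriv (by ring)

lemma hasDerivAt_phiDisc_snd : HasDerivAt (fun s' => phiDisc a r β t s')
    (2 * Afun a r β t s * (2 * exp (2 * t) * exp (2 * s) + 2 * d1 a r β ^ 2 * exp (2 * s)) -
      2 * (4 * r * exp (s + t)) ^ 2) s := by
  have hE : HasDerivAt (fun s' => 4 * r * exp (s' + t)) (4 * r * exp (s + t)) s := by
    simpa using (((hasDerivAt_id' s).add_const t).exp).const_mul (4 * r)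
  exact ((hasDerivAt_Afun_snd.pow 2).sub (hE.pow 2)).congr_deriv (by ring)

lemma deriv_deriv_phi (hr : 0 < r) (h : 4 * r * exp (s + t) < Afun a r β t s) :
    deriv (fun s' => deriv (fun t' => phi a r β t' s') t) s =
      32 * exp (2 * t) * exp (2 * s) * mixedDerivPoly a r (cos β) (exp (2 * t)) (exp (2 * s)) /
        (2 * phiDisc a r β t s * √(phiDisc a r β t s)) := by
  have hphi_fst : (fun s' => deriv (fun t' => phi a r β t' s') t) =ᶠ[nhds s]
      fun s' => phiNum a r β t s' / √(phiDisc a r β t s') := by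
    have hnear : ∀ᶠ s' in nhds s, 4 * r * exp (s' + t) < Afun a r β t s' :=
      (isOpen_lt (by fun_prop) (by unfold Afun; fun_prop)).mem_nhds h
    exact hnear.mono fun s' hs' => (hasDerivAt_phi_fst hr hs').deriv
  rw [hphi_fst.deriv_eq,
    (hasDerivAt_phiNum_snd.div_sqrt hasDerivAt_phiDisc_snd (phiDisc_pos hr h)).deriv]
  have hE : exp (s + t) ^ 2 = exp (2 * t) * exp (2 * s) := by
    rw [← exp_add, sq, ← exp_add]; ring_nf
  congr 1
  rw [phiNum, phiDisc, Afun_eq, mul_pow, hE, d1_sq, d2_sq, mixedDerivPoly]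
  ring

end

theorem zero_set_of_mixed_derivative_general (a r β t s : ℝ) (hr : 0 < r)
    (h : 4 * r * Real.exp (s + t) < Afun a r β t s) :
    (r ≤ a * Real.cos β →
      0 < deriv (fun s' => deriv (fun t' => phi a r β t' s') t) s) ∧
    (a * Real.cos β < r →
      (deriv (fun s' => deriv (fun t' => phi a r β t' s') t) s = 0 ↔
        (Real.exp (2 * t) - X0 a r β) * (Real.exp (2 * s) - Y0 a r β) = Bq a r β)) := by
  have hD := phiDisc_pos hr h
  have hden : 0 < 2 * phiDisc a r β t s * √(phiDisc a r β t s) := by positivity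
  have hXY : 0 < 32 * exp (2 * t) * exp (2 * s) := by positivity
  rw [deriv_deriv_phi hr h]
  refine ⟨fun hle => div_pos (mul_pos hXY ?_) hden, fun hlt => ?_⟩
  · exact mixedDerivPoly_pos hr (cos_le_one β) (neg_one_le_cos β) (exp_pos _) (exp_pos _) hle
  · rw [div_eq_zero_iff, or_iff_left hden.ne', mul_eq_zero, or_iff_right hXY.ne',
      mixedDerivPoly_eq a r β _ _ hlt.ne, mul_eq_zero,
      or_iff_right (mul_ne_zero hr.ne' (sub_ne_zero.2 hlt.ne)), sub_eq_zero]

/-- Description of the zero set of `φ''_st`: it is empty when `r ≤ a cos β`, and it is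
the curve `(e^{2t} − X₀)(e^{2s} − Y₀) = B` when `r > a cos β`. -/
theorem zero_set_of_mixed_derivative (a r β t s : ℝ) (ha : 0 ≤ a) (hr : 0 < r)
    (hβ : β ∈ Set.Ioc 0 (π / 2))
    (h : 4 * r * Real.exp (s + t) < Afun a r β t s) :
    (r ≤ a * Real.cos β →
      0 < deriv (fun s' => deriv (fun t' => phi a r β t' s') t) s) ∧
    (a * Real.cos β < r →
      (deriv (fun s' => deriv (fun t' => phi a r β t' s') t) s = 0 ↔
        (Real.exp (2 * t) - X0 a r β) * (Real.exp (2 * s) - Y0 a r β) = Bq a r β)) :=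
  zero_set_of_mixed_derivative_general a r β t s hr h

end
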